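/- arXiv:1204.0332 — 2 statements merged into one kernel-verified Lean document; each statement's English description precedes it below -/
import Mathlib

section
/- Let Z be unit Fréchet and A = (A₁, …, A_d) independent of Z with 0 < E[max(A_j,0)] < ∞ for all j. Then for all x ∈ (0,∞)^d, lim_{n→∞} P[A₁Z ≤ n x₁, …, A_d Z ≤ n x_d]^n = exp{−E[max(A₁/x₁, …, A_d/x_d, 0)]}. -/
/-!
Conditionally on `A = a`, and up to the null event `Z ≤ 0`, the event `A_j Z ≤ n x_j` for all
`j` is `Z M(a) ≤ n` with `M(a) = max(a₁/x₁, …, a_d/x_d, 0)`, whose Fréchet probability is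
`exp(-M(a)/n)`. Hence the probability is `E[exp(-M/n)]`. As `0 ≤ n(1 - exp(-m/n)) ≤ m` and the left
side tends to `m`, dominated convergence gives `n(1 - E[exp(-M/n)]) → E[M]`, and then
`E[exp(-M/n)]^n → exp(-E[M])`.
-/

open MeasureTheory ProbabilityTheory Filter Topology

theorem Real.tendsto_nat_mul_exp_div_sub_one (m : ℝ) :
    Tendsto (fun n : ℕ => n * (Real.exp (m / n) - 1)) atTop (𝓝 m) := by
  rw [tendsto_iff_norm_sub_tendsto_zero]
  have hsmall : ∀ᶠ n : ℕ in atTop, |m / n| ≤ 1 :=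
    (tendsto_const_div_atTop_nhds_zero_nat m).abs.eventually_le_const (by simp)
  refine squeeze_zero' (Eventually.of_forall fun n => norm_nonneg _) ?_
    (tendsto_const_div_atTop_nhds_zero_nat (m ^ 2))
  filter_upwards [hsmall, eventually_gt_atTop 0] with n hsmall hn
  have hn : (0 : ℝ) < n := Nat.cast_pos.2 hn
  calc ‖n * (Real.exp (m / n) - 1) - m‖ = n * |Real.exp (m / n) - 1 - m / n| := by
        rw [show n * (Real.exp (m / n) - 1) - m = n * (Real.exp (m / n) - 1 - m / n) by
          field_simp, norm_mul, Real.norm_of_nonneg hn.le, Real.norm_eq_abs]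
    _ ≤ n * (m / n) ^ 2 := by gcongr; exact Real.abs_exp_sub_one_sub_id_le hsmall
    _ = m ^ 2 / n := by field_simp

theorem Real.abs_mul_exp_neg_div_sub_one_le {s t : ℝ} (hs : 0 ≤ s) (ht : 0 ≤ t) :
    |s * (Real.exp (-t / s) - 1)| ≤ t := by
  have hexp_le : Real.exp (-t / s) ≤ 1 :=
    Real.exp_le_one_iff.2 (div_nonpos_of_nonpos_of_nonneg (neg_nonpos.2 ht) hs)
  rw [abs_of_nonpos (mul_nonpos_of_nonneg_of_nonpos hs (sub_nonpos.2 hexp_le))]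
  rcases hs.eq_or_lt with rfl | hs
  · simpa using ht
  · calc -(s * (Real.exp (-t / s) - 1)) ≤ -(s * (-t / s)) := by
          gcongr; linarith [Real.add_one_le_exp (-t / s)]
      _ = t := by field_simp

theorem integrable_exp_neg_div_of_nonneg {α : Type*} [MeasurableSpace α] {μ : Measure α}
    [IsFiniteMeasure μ] {f : α → ℝ} (hf : AEStronglyMeasurable f μ) (hf0 : 0 ≤ f) {t : ℝ}
    (ht : 0 ≤ t) :
    Integrable (fun a => Real.exp (-f a / t)) μ := by
  refine (integrable_const 1).mono' (by fun_prop) (ae_of_all _ fun a => ?_)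
  rw [Real.norm_of_nonneg (Real.exp_pos _).le, Real.exp_le_one_iff]
  exact div_nonpos_of_nonpos_of_nonneg (neg_nonpos.2 (hf0 a)) ht

theorem tendsto_integral_exp_neg_div_pow {α : Type*} [MeasurableSpace α] {μ : Measure α}
    [IsProbabilityMeasure μ] {f : α → ℝ} (hf : Integrable f μ) (hf0 : 0 ≤ f) :
    Tendsto (fun n : ℕ => (∫ a, Real.exp (-f a / n) ∂μ) ^ n) atTop
      (𝓝 (Real.exp (-∫ a, f a ∂μ))) := by
  have hlim : Tendsto (fun n : ℕ => n * (∫ a, Real.exp (-f a / n) ∂μ - 1)) atTop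
      (𝓝 (∫ a, -f a ∂μ)) := by
    have heq : ∀ n : ℕ, n * (∫ a, Real.exp (-f a / n) ∂μ - 1)
        = ∫ a, n * (Real.exp (-f a / n) - 1) ∂μ := fun n => by
      rw [integral_const_mul, integral_sub
        (integrable_exp_neg_div_of_nonneg hf.1 hf0 n.cast_nonneg) (integrable_const 1),
        integral_const, probReal_univ, one_smul]
    simp only [heq]
    refine tendsto_integral_of_dominated_convergence f (fun n => by fun_prop) hf
      (fun n => ae_of_all _ fun a => ?_)
      (ae_of_all _ fun a => Real.tendsto_nat_mul_exp_div_sub_one (-f a))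
    exact Real.abs_mul_exp_neg_div_sub_one_le n.cast_nonneg (hf0 a)
  rw [integral_neg] at hlim
  simpa using Real.tendsto_one_add_pow_exp_of_tendsto hlim

theorem forall_mul_le_mul_iff_mul_sup'_div_le {ι : Type*} [Fintype ι]
    (hι : (Finset.univ : Finset ι).Nonempty) {a x : ι → ℝ} (hx : ∀ j, 0 < x j) {z : ℝ} (hz : 0 < z)
    (t : ℝ) : (∀ j, a j * z ≤ t * x j) ↔ z * Finset.univ.sup' hι (fun j => a j / x j) ≤ t := by
  rw [← le_div_iff₀' hz, Finset.sup'_le_iff]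
  simp only [Finset.mem_univ, true_implies]
  exact forall_congr' fun j => (div_le_div_iff₀ (hx j) hz).symm

theorem max_sup'_div_le_sum {ι : Type*} [Fintype ι] (hι : (Finset.univ : Finset ι).Nonempty)
    {a x : ι → ℝ} (hx : ∀ j, 0 < x j) :
    max (Finset.univ.sup' hι fun j => a j / x j) 0 ≤ ∑ j, max (a j) 0 / x j := by
  have hterm_nonneg : ∀ j, 0 ≤ max (a j) 0 / x j := fun j =>
    div_nonneg (le_max_right _ _) (hx j).le
  refine max_le (Finset.sup'_le _ _ fun j _ => ?_) (Finset.sum_nonneg fun j _ => hterm_nonneg j)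
  calc a j / x j ≤ max (a j) 0 / x j := div_le_div_of_nonneg_right (le_max_left _ _) (hx j).le
    _ ≤ ∑ k, max (a k) 0 / x k :=
      Finset.single_le_sum (fun k _ => hterm_nonneg k) (Finset.mem_univ j)

theorem measurable_max_sup'_div {ι : Type*} [Fintype ι] (hι : (Finset.univ : Finset ι).Nonempty)
    (x : ι → ℝ) : Measurable fun a : ι → ℝ => max (Finset.univ.sup' hι fun j => a j / x j) 0 := by
  fun_prop

def IsUnitFrechet (ν : Measure ℝ) : Prop :=
  ∀ z, 0 < z → ν (Set.Iic z) = ENNReal.ofReal (Real.exp (-(1 / z)))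

theorem IsUnitFrechet.ae_pos {ν : Measure ℝ} (hν : IsUnitFrechet ν) : ∀ᵐ z ∂ν, 0 < z := by
  have htend : Tendsto (fun z : ℝ => ENNReal.ofReal (Real.exp (-(1 / z)))) (𝓝[>] 0) (𝓝 0) := by
    rw [← ENNReal.ofReal_zero]
    refine (ENNReal.continuous_ofReal.tendsto 0).comp (Real.tendsto_exp_atBot.comp ?_)
    simpa only [one_div, Function.comp_def] using
      tendsto_neg_atTop_atBot.comp tendsto_inv_nhdsGT_zero
  rw [ae_iff]
  simp only [not_lt]
  refine le_antisymm (ge_of_tendsto htend ?_) bot_le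
  filter_upwards [self_mem_nhdsWithin] with z hz
  exact (measure_mono (Set.Iic_subset_Iic.2 hz.le)).trans_eq (hν z hz)

theorem IsUnitFrechet.measure_mul_le {ν : Measure ℝ} [IsProbabilityMeasure ν]
    (hν : IsUnitFrechet ν) (s : ℝ) {t : ℝ} (ht : 0 < t) :
    ν {z | z * s ≤ t} = ENNReal.ofReal (Real.exp (-max s 0 / t)) := by
  rcases le_or_gt s 0 with hs | hs
  · rw [max_eq_right hs, neg_zero, zero_div, Real.exp_zero, ENNReal.ofReal_one,
      ← measure_univ (μ := ν)]
    refine measure_congr (eventuallyEq_univ.2 ?_)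
    filter_upwards [hν.ae_pos] with z hz
    exact (mul_nonpos_of_nonneg_of_nonpos hz.le hs).trans ht.le
  · have hset : {z | z * s ≤ t} = Set.Iic (t / s) := Set.ext fun z => (le_div_iff₀ hs).symm
    rw [hset, hν _ (div_pos ht hs), max_eq_left hs.le, one_div_div, neg_div]

theorem IsUnitFrechet.measure_forall_mul_le {ν : Measure ℝ} [IsProbabilityMeasure ν]
    (hν : IsUnitFrechet ν) {ι : Type*} [Fintype ι] (hι : (Finset.univ : Finset ι).Nonempty)
    {x : ι → ℝ} (hx : ∀ j, 0 < x j) (a : ι → ℝ) {t : ℝ} (ht : 0 < t) :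
    ν {z | ∀ j, a j * z ≤ t * x j}
      = ENNReal.ofReal (Real.exp (-max (Finset.univ.sup' hι fun j => a j / x j) 0 / t)) := by
  rw [← hν.measure_mul_le _ ht]
  refine measure_congr ?_
  filter_upwards [hν.ae_pos] with z hz
  exact propext (forall_mul_le_mul_iff_mul_sup'_div_le hι hx hz t)

theorem ProbabilityTheory.IndepFun.measure_mem_eq_lintegral {Ω α β : Type*} [MeasurableSpace Ω]
    [MeasurableSpace α] [MeasurableSpace β] {μ : Measure Ω} [IsFiniteMeasure μ] {X : Ω → α}
    {Y : Ω → β} (hXY : IndepFun X Y μ) (hX : Measurable X) (hY : Measurable Y) {S : Set (α × β)}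
    (hS : MeasurableSet S) :
    μ {ω | (X ω, Y ω) ∈ S} = ∫⁻ a, μ.map Y (Prod.mk a ⁻¹' S) ∂μ.map X := by
  show μ ((fun ω => (X ω, Y ω)) ⁻¹' S) = _
  rw [← Measure.map_apply (hX.prodMk hY) hS,
    hXY.map_prod_eq_prod_map_map hX.aemeasurable hY.aemeasurable, Measure.prod_apply hS]

theorem measure_forall_mul_le_toReal_eq_integral_exp {ι Ω : Type*} [Fintype ι]
    (hι : (Finset.univ : Finset ι).Nonempty) [MeasureSpace Ω]
    [IsProbabilityMeasure (ℙ : Measure Ω)]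
    {Z : Ω → ℝ} {W : Ω → ι → ℝ} (hZ : Measurable Z) (hW : Measurable W)
    (hZlaw : ∀ z : ℝ, 0 < z → ℙ {ω | Z ω ≤ z} = ENNReal.ofReal (Real.exp (-(1 / z))))
    (hindep : IndepFun W Z) {x : ι → ℝ} (hx : ∀ j, 0 < x j) {t : ℝ} (ht : 0 < t) :
    (ℙ {ω | ∀ j, W ω j * Z ω ≤ t * x j}).toReal
      = ∫ ω, Real.exp (-max (Finset.univ.sup' hι fun j => W ω j / x j) 0 / t) := by
  have : IsProbabilityMeasure (Measure.map Z ℙ) :=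
    Measure.isProbabilityMeasure_map hZ.aemeasurable
  have hν : IsUnitFrechet (Measure.map Z ℙ) :=
    fun z hz => (Measure.map_apply hZ measurableSet_Iic).trans (hZlaw z hz)
  have hS : MeasurableSet {p : (ι → ℝ) × ℝ | ∀ j, p.1 j * p.2 ≤ t * x j} := by
    simp only [Set.ofPred_forall]
    exact MeasurableSet.iInter fun j => measurableSet_le (by fun_prop) (by fun_prop)
  have hm := measurable_max_sup'_div hι x
  rw [integral_eq_lintegral_of_nonneg_ae (ae_of_all _ fun ω => (Real.exp_pos _).le)
    (Measurable.aestronglyMeasurable (by fun_prop))]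
  congr 1
  calc ℙ {ω | ∀ j, W ω j * Z ω ≤ t * x j}
      = ∫⁻ a, Measure.map Z ℙ (Prod.mk a ⁻¹' {p : (ι → ℝ) × ℝ | ∀ j, p.1 j * p.2 ≤ t * x j})
          ∂Measure.map W ℙ := hindep.measure_mem_eq_lintegral hW hZ hS
    _ = ∫⁻ a, ENNReal.ofReal (Real.exp (-max (Finset.univ.sup' hι fun j => a j / x j) 0 / t))
          ∂Measure.map W ℙ :=
        lintegral_congr fun a => hν.measure_forall_mul_le hι hx a ht
    _ = _ := lintegral_map (by fun_prop) hW

theorem frechet_mixture_max_stable_limit_general {d : ℕ} (hd : 0 < d)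
    {Ω : Type*} [MeasureSpace Ω] [IsProbabilityMeasure (ℙ : Measure Ω)]
    (Z : Ω → ℝ) (hZmeas : Measurable Z)
    (hZ : ∀ z : ℝ, 0 < z → (ℙ {ω | Z ω ≤ z}) = ENNReal.ofReal (Real.exp (-(1 / z))))
    (A : Fin d → Ω → ℝ) (hAmeas : ∀ j, Measurable (A j))
    (hAint : ∀ j, Integrable (fun ω => max (A j ω) 0))
    (hindep : IndepFun Z (fun ω => fun j => A j ω)) :
    ∀ x : Fin d → ℝ, (∀ j, 0 < x j) →
      Filter.Tendsto
        (fun n : ℕ => (ℙ {ω | ∀ j, A j ω * Z ω ≤ n * x j}).toReal ^ n)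
        Filter.atTop
        (nhds (Real.exp (-(∫ ω, max (Finset.univ.sup'
          (Finset.univ_nonempty_iff.2 (Fin.pos_iff_nonempty.1 hd))
          (fun j => A j ω / x j)) 0)))) := by
  intro x hx
  have hι : (Finset.univ : Finset (Fin d)).Nonempty :=
    Finset.univ_nonempty_iff.2 (Fin.pos_iff_nonempty.1 hd)
  have hA : Measurable fun ω j => A j ω := measurable_pi_lambda _ hAmeas
  have hM_int : Integrable fun ω => max (Finset.univ.sup' hι fun j => A j ω / x j) 0 := by
    refine (integrable_finsetSum Finset.univ fun j _ => (hAint j).div_const (x j)).mono'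
      ((measurable_max_sup'_div hι x).comp hA).aestronglyMeasurable (ae_of_all _ fun ω => ?_)
    rw [Real.norm_of_nonneg (le_max_right _ _)]
    exact max_sup'_div_le_sum hι hx
  refine (tendsto_integral_exp_neg_div_pow hM_int fun ω => le_max_right _ _).congr' ?_
  filter_upwards [eventually_gt_atTop 0] with n hn
  rw [measure_forall_mul_le_toReal_eq_integral_exp hι hZmeas hA hZ hindep.symm hx
    (Nat.cast_pos.2 hn)]

/-- If `Z` is unit Fréchet and independent of `A = (A₁,…,A_d)` with
`0 < E[max(A_j,0)] < ∞` for all `j`, then for all `x ∈ (0,∞)^d`,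
`lim_{n→∞} P[A₁Z ≤ n x₁, …, A_dZ ≤ n x_d]^n = exp{−E[max(A₁/x₁, …, A_d/x_d, 0)]}`. -/
theorem frechet_mixture_max_stable_limit {d : ℕ} (hd : 0 < d)
    {Ω : Type*} [MeasureSpace Ω] [IsProbabilityMeasure (ℙ : Measure Ω)]
    (Z : Ω → ℝ) (hZmeas : Measurable Z)
    (hZ : ∀ z : ℝ, 0 < z → (ℙ {ω | Z ω ≤ z}) = ENNReal.ofReal (Real.exp (-(1 / z))))
    (A : Fin d → Ω → ℝ) (hAmeas : ∀ j, Measurable (A j))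
    (hAint : ∀ j, Integrable (fun ω => max (A j ω) 0))
    (hApos : ∀ j, 0 < ∫ ω, max (A j ω) 0)
    (hindep : IndepFun Z (fun ω => fun j => A j ω)) :
    ∀ x : Fin d → ℝ, (∀ j, 0 < x j) →
      Filter.Tendsto
        (fun n : ℕ => (ℙ {ω | ∀ j, A j ω * Z ω ≤ n * x j}).toReal ^ n)
        Filter.atTop
        (nhds (Real.exp (-(∫ ω, max (Finset.univ.sup'
          (Finset.univ_nonempty_iff.2 (Fin.pos_iff_nonempty.1 hd))
          (fun j => A j ω / x j)) 0)))) :=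
  frechet_mixture_max_stable_limit_general hd Z hZmeas hZ A hAmeas hAint hindep
end

section
/- If P[A_j > 0 ≥ max_{i≠j} A_i] = p_j with p_j > 0 and p₁ + ⋯ + p_d = 1, and E[max(A_j, 0)] = 1 for each j, then E[max(x₁A₁, …, x_dA_d, 0)] = x₁ + ⋯ + x_d for all x ∈ [0,∞)^d. -/
open MeasureTheory ProbabilityTheory

/-- If `P[A_j > 0 ≥ max_{i≠j} A_i] = p_j` with `p_j > 0` and `p₁ + ⋯ + p_d = 1`,
and `E[max(A_j,0)] = 1` for each `j`, then
`E[max(x₁A₁, …, x_dA_d, 0)] = x₁ + ⋯ + x_d` (independence). -/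
theorem ell_A_independence {d : ℕ} (hd : 0 < d)
    {Ω : Type*} [MeasureSpace Ω] [IsProbabilityMeasure (ℙ : Measure Ω)]
    (A : Fin d → Ω → ℝ) (hAmeas : ∀ j, Measurable (A j))
    (hAint : ∀ j, Integrable (A j))
    (p : Fin d → ℝ) (hp : ∀ j, 0 < p j) (hpsum : ∑ j, p j = 1)
    (hpj : ∀ j, ℙ {ω | 0 < A j ω ∧ ∀ i, i ≠ j → A i ω ≤ 0} = ENNReal.ofReal (p j))
    (hAnorm : ∀ j, ∫ ω, max (A j ω) 0 = 1) :
    ∀ x : Fin d → ℝ, (∀ j, 0 ≤ x j) →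
      ∫ ω, max (Finset.univ.sup'
        (Finset.univ_nonempty_iff.2 (Fin.pos_iff_nonempty.1 hd))
        (fun j => x j * A j ω)) 0 = ∑ j, x j := by
  intro x hx
  set E : Fin d → Set Ω := fun j => {ω | 0 < A j ω ∧ ∀ i, i ≠ j → A i ω ≤ 0} with hE
  have hEmeas : ∀ j, MeasurableSet (E j) := by
    intro j
    have : E j = {ω | 0 < A j ω} ∩ ⋂ i, ⋂ (_ : i ≠ j), {ω | A i ω ≤ 0} := by
      ext ω; simp [hE]
    rw [this]
    exact (measurableSet_lt measurable_const (hAmeas j)).inter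
      (MeasurableSet.iInter fun i => MeasurableSet.iInter fun _ =>
        measurableSet_le (hAmeas i) measurable_const)
  have hdisj : Pairwise (Function.onFun Disjoint E) := by
    intro i j hij
    refine Set.disjoint_left.2 fun ω hωi hωj => ?_
    exact absurd hωj.1 (not_lt.2 (hωi.2 j (Ne.symm hij)))
  have hunion : ℙ (⋃ j, E j) = 1 := by
    rw [measure_iUnion hdisj hEmeas]
    have : ∀ j : Fin d, ℙ (E j) = ENNReal.ofReal (p j) := hpj
    simp_rw [this]
    rw [tsum_fintype, ← ENNReal.ofReal_sum_of_nonneg (fun j _ => (hp j).le), hpsum,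
      ENNReal.ofReal_one]
  have hnull : ℙ (⋃ j, E j)ᶜ = 0 := by
    rwa [prob_compl_eq_zero_iff (MeasurableSet.iUnion hEmeas)]
  have hae : (fun ω => max (Finset.univ.sup'
        (Finset.univ_nonempty_iff.2 (Fin.pos_iff_nonempty.1 hd))
        (fun j => x j * A j ω)) 0)
      =ᵐ[ℙ] fun ω => ∑ i, x i * max (A i ω) 0 := by
    refine Filter.eventuallyEq_of_mem ((MeasureTheory.mem_ae_iff).2 hnull) ?_
    intro ω hω
    obtain ⟨j, hωj⟩ := Set.mem_iUnion.1 hω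
    obtain ⟨hpos, hneg⟩ := hωj
    have hsup : Finset.univ.sup'
        (Finset.univ_nonempty_iff.2 (Fin.pos_iff_nonempty.1 hd))
        (fun i => x i * A i ω) = x j * A j ω := by
      refine le_antisymm (Finset.sup'_le _ _ fun i _ => ?_)
        (Finset.le_sup' (fun i => x i * A i ω) (Finset.mem_univ j))
      rcases eq_or_ne i j with rfl | hij
      · exact le_refl _
      · exact le_trans (mul_nonpos_of_nonneg_of_nonpos (hx i) (hneg i hij))
          (mul_nonneg (hx j) hpos.le)
    have hrhs : ∑ i, x i * max (A i ω) 0 = x j * A j ω := by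
      rw [Finset.sum_eq_single j]
      · rw [max_eq_left hpos.le]
      · intro i _ hij
        rw [max_eq_right (hneg i hij), mul_zero]
      · intro h; exact absurd (Finset.mem_univ j) h
    simp only [hsup, hrhs, max_eq_left (mul_nonneg (hx j) hpos.le)]
  rw [integral_congr_ae hae, integral_finset_sum _
    (fun i _ => ((hAint i).pos_part.const_mul (x i)))]
  simp_rw [integral_const_mul]
  simp [hAnorm]
end
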